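/- Let G be an Abelian group of cardinality γ > ℵ₀, let F_γ be the free group of rank γ, and let κ be a cardinal such that either ℵ₀ < κ < γ, or κ = γ and γ is singular. Then G and F_γ are not κ-asymorphic. -/

import Mathlib

/-!
For an asymorphism `f`, call `f(a x) f(x)⁻¹` (for `x` ranging over the group) the displacements
of `a`. For a `κ`-asymorphism, fewer than `κ` elements have altogether fewer than `κ`
displacements, under `f` and under `f⁻¹`; by cardinal arithmetic the same holds with `γ` in place
of `κ`.

Commutativity of `G` makes the displacements of a free generator `t` under `f⁻¹` large: given
`λ < γ` generators `l`, choose `t` outside the fewer than `γ` letters of all words that occur as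
displacements of the elements `f⁻¹(l) f⁻¹(1)⁻¹`. If `f⁻¹(t l) f⁻¹(l)⁻¹` took the same value for
two generators `l ≠ l'`, commutativity would write `t (l l'⁻¹) t⁻¹` as a product of such words,
impossible since `t` is not among their letters. So single displacements of `f⁻¹` have every size
`λ < γ`. For `κ < γ` this contradicts the choice `λ = κ`; for `κ = γ` singular, `cof γ < γ`
generators with cofinal displacement sizes contradict the bound on unions.
-/

open Cardinal Pointwise

universe u

/-- A bijection `f : G ≃ H` between groups is a `κ`-asymorphism if for all
`X ∈ [G]^{<κ}` and `Y ∈ [H]^{<κ}` there are `X' ∈ [G]^{<κ}`, `Y' ∈ [H]^{<κ}` with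
`f(X x) ⊆ Y' ⬝ f x` for all `x ∈ G` and `f⁻¹(Y y) ⊆ X' ⬝ f⁻¹ y` for all `y ∈ H`. -/
def IsAsymorphism {G H : Type u} [Group G] [Group H] (κ : Cardinal.{u})
    (f : G ≃ H) : Prop :=
  ∀ X : Set G, ∀ Y : Set H, #X < κ → #Y < κ →
    ∃ X' : Set G, ∃ Y' : Set H, #X' < κ ∧ #Y' < κ ∧
      (∀ x : G, ⇑f '' (X * {x}) ⊆ Y' * {f x}) ∧
      (∀ y : H, ⇑f.symm '' (Y * {y}) ⊆ X' * {f.symm y})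

open FreeGroup

namespace Cardinal

theorem mk_biUnion_lt_of_lt {α β : Type u} {c d : Cardinal.{u}} (hc : ℵ₀ ≤ c) {s : Set β}
    (A : β → Set α) (hs : #s < c) (hA : ∀ b ∈ s, #(A b) ≤ d) (hd : d < c) :
    #(⋃ b ∈ s, A b) < c :=
  calc #(⋃ b ∈ s, A b) ≤ #s * ⨆ b : s, #(A b) := mk_biUnion_le A s
    _ ≤ #s * d := mul_le_mul_right (ciSup_le' fun b : s => hA b b.2) _
    _ < c := mul_lt_of_lt hc hs hd

theorem exists_mk_lt_le_mk_biUnion_of_cof_ord_lt {α β : Type u} {κ : Cardinal.{u}}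
    (hκ : ℵ₀ ≤ κ) (hcof : κ.ord.cof < κ) (S : β → Set α) (hS : ∀ c < κ, ∃ b, c ≤ #(S b)) :
    ∃ T : Set β, #T < κ ∧ κ ≤ #(⋃ b ∈ T, S b) := by
  have := noMaxOrder hκ
  obtain ⟨s, hs, hs_card⟩ := Order.exists_cof_eq κ.ord.ToType
  rw [Ordinal.cof_toType] at hs_card
  choose b hb using fun x : κ.ord.ToType => hS _ (by simpa using mk_Iio_lt x)
  refine ⟨b '' s, mk_image_le.trans_lt (hs_card.trans_lt hcof), ?_⟩
  by_contra! hU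
  have hcover : (Set.univ : Set κ.ord.ToType) ⊆ ⋃ x ∈ s, Set.Iio x := by
    intro y _
    obtain ⟨z, hz⟩ := exists_gt y
    obtain ⟨x, hx, hzx⟩ := hs z
    exact Set.mem_biUnion hx (hz.trans_le hzx)
  have hIio : ∀ x ∈ s, #(Set.Iio x) ≤ #(⋃ b' ∈ b '' s, S b') := fun x hx =>
    (hb x).trans (mk_le_mk_of_subset (Set.subset_biUnion_of_mem (Set.mem_image_of_mem b hx)))
  have hsmall := mk_biUnion_lt_of_lt hκ (fun x => Set.Iio x) (hs_card.trans_lt hcof) hIio hU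
  have huniv : #(Set.univ : Set κ.ord.ToType) = κ := by simp
  exact (huniv ▸ mk_le_mk_of_subset hcover).not_gt hsmall

end Cardinal

namespace FreeGroup

variable {ι : Type*} [DecidableEq ι]

def letters (w : FreeGroup ι) : Set ι := {i | ∃ b, (i, b) ∈ w.toWord}

theorem finite_letters (w : FreeGroup ι) : (letters w).Finite :=
  (w.toWord.finite_toSet.image Prod.fst).subset fun i ⟨b, hb⟩ => ⟨(i, b), hb, rfl⟩

@[simp]
theorem letters_one : letters (1 : FreeGroup ι) = ∅ := by
  simp [letters]

theorem letters_mul_subset (v w : FreeGroup ι) : letters (v * w) ⊆ letters v ∪ letters w :=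
  fun i ⟨b, hb⟩ => by
    rcases List.mem_append.mp ((toWord_mul_sublist v w).subset hb) with h | h
    exacts [Or.inl ⟨b, h⟩, Or.inr ⟨b, h⟩]

@[simp]
theorem letters_inv (w : FreeGroup ι) : letters w⁻¹ = letters w := by
  ext i
  simp [letters, toWord_inv, invRev, or_comm]

def supported (J : Set ι) : Subgroup (FreeGroup ι) where
  carrier := {w | letters w ⊆ J}
  one_mem' := by simp
  mul_mem' hv hw := (letters_mul_subset _ _).trans (Set.union_subset hv hw)
  inv_mem' hw := by simpa using hw

theorem mem_supported {J : Set ι} {w : FreeGroup ι} : w ∈ supported J ↔ letters w ⊆ J :=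
  Iff.rfl

theorem of_mem_supported {J : Set ι} {j : ι} (hj : j ∈ J) : of j ∈ supported J := by
  simp [mem_supported, letters, toWord_of, hj]

theorem toWord_conj_of {t : ι} {w : FreeGroup ι} (ht : t ∉ letters w) (hw : w ≠ 1) :
    (of t * w * (of t)⁻¹).toWord = (t, true) :: (w.toWord ++ [(t, false)]) := by
  have hletter : ∀ p ∈ w.toWord, p.1 ≠ t := fun p hp hpt => ht ⟨p.2, hpt ▸ hp⟩
  obtain ⟨p, L, hpL⟩ := List.exists_cons_of_ne_nil (mt toWord_eq_nil_iff.mp hw)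
  have hred : IsReduced ((t, true) :: (w.toWord ++ [(t, false)])) := by
    rw [hpL, List.cons_append, isReduced_cons_cons, ← List.cons_append, ← hpL]
    refine ⟨fun h => absurd h.symm (hletter p (hpL ▸ List.mem_cons_self)), ?_⟩
    refine List.isChain_append.mpr ⟨isReduced_toWord, List.isChain_singleton _, ?_⟩
    rintro q hq _ ⟨⟩ h
    exact absurd h (hletter q (List.mem_of_getLast? hq))
  conv_lhs => rw [← mk_toWord (x := w)]
  rw [← hred.reduce_eq, ← toWord_mk]
  simp [of, inv_mk, invRev, mul_mk]

theorem conj_of_notMem_supported {J : Set ι} {t : ι} (ht : t ∉ J) {w : FreeGroup ι}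
    (hw : w ∈ supported J) (hw1 : w ≠ 1) : of t * w * (of t)⁻¹ ∉ supported J := fun h =>
  ht (h ⟨true, by simp [toWord_conj_of (fun h => ht (hw h)) hw1]⟩)

end FreeGroup

section Displacement

variable {G H : Type u} [Group G] [Group H]

def displacement (f : G ≃ H) (a : G) : Set H :=
  Set.range fun x => f (a * x) * (f x)⁻¹

def HasSmallDisplacements (κ : Cardinal.{u}) (f : G ≃ H) : Prop :=
  ∀ X : Set G, #X < κ → #(⋃ a ∈ X, displacement f a) < κ

variable {κ : Cardinal.{u}} {f : G ≃ H}

theorem IsAsymorphism.symm (hf : IsAsymorphism κ f) : IsAsymorphism κ f.symm :=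
  fun X Y hX hY =>
    let ⟨X', Y', hX', hY', hfwd, hbwd⟩ := hf Y X hY hX
    ⟨Y', X', hY', hX', hbwd, hfwd⟩

theorem IsAsymorphism.hasSmallDisplacements (hf : IsAsymorphism κ f) (hκ : κ ≠ 0) :
    HasSmallDisplacements κ f := by
  intro X hX
  obtain ⟨-, Y', -, hY', hfwd, -⟩ := hf X ∅ hX (by simpa [pos_iff_ne_zero] using hκ)
  refine (mk_le_mk_of_subset ?_).trans_lt hY'
  simp only [Set.iUnion_subset_iff, displacement, Set.range_subset_iff]
  intro a ha x
  obtain ⟨y, hy, _, rfl, hyx⟩ := hfwd x ⟨a * x, Set.mul_mem_mul ha rfl, rfl⟩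
  rwa [← hyx, mul_inv_cancel_right]

theorem HasSmallDisplacements.mk_displacement_lt (hf : HasSmallDisplacements κ f) (hκ : 1 < κ)
    (a : G) : #(displacement f a) < κ := by
  simpa using hf {a} (by simpa using hκ)

theorem HasSmallDisplacements.mono (hf : HasSmallDisplacements κ f) (hκ : ℵ₀ ≤ κ)
    {γ : Cardinal.{u}} (hκγ : κ ≤ γ) : HasSmallDisplacements γ f := by
  intro X hX
  rcases lt_or_ge #X κ with hXκ | hκX
  · exact (hf X hXκ).trans_le hκγ
  · exact mk_biUnion_lt_of_lt (hκ.trans (hκX.trans hX.le)) _ hX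
      (fun a _ => (hf.mk_displacement_lt (one_lt_aleph0.trans_le hκ) a).le) (hκX.trans_lt hX)

end Displacement

theorem conj_mem_displacement_mul_inv {G H : Type u} [CommGroup G] [Group H] (f : G ≃ H)
    {t l l' : H} (h : f.symm (t * l) * (f.symm l)⁻¹ = f.symm (t * l') * (f.symm l')⁻¹) :
    t * (l * l'⁻¹) * t⁻¹ ∈ displacement f (f.symm l * (f.symm 1)⁻¹) *
      (displacement f (f.symm l' * (f.symm 1)⁻¹))⁻¹ := by
  set u := f.symm (t * l) * (f.symm l)⁻¹ * f.symm 1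
  have hu : ∀ m, f.symm (t * m) * (f.symm m)⁻¹ * f.symm 1 = u →
      f (f.symm m * (f.symm 1)⁻¹ * u) = t * m := by
    intro m hm
    rw [← hm, mul_mul_mul_comm, inv_mul_cancel, mul_one, mul_comm, inv_mul_cancel_right,
      Equiv.apply_symm_apply]
  refine ⟨_, ⟨u, rfl⟩, _, Set.inv_mem_inv.mpr ⟨u, rfl⟩, ?_⟩
  dsimp only
  rw [hu l rfl, hu l' (by rw [← h])]
  group

theorem exists_generator_le_mk_displacement_symm {G : Type u} [CommGroup G] {ι : Type u}
    (f : G ≃ FreeGroup ι) (hι : ℵ₀ < #ι) (hf : HasSmallDisplacements #ι f)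
    (hf' : HasSmallDisplacements #ι f.symm) {c : Cardinal.{u}} (hc : c < #ι) :
    ∃ t, c ≤ #(displacement f.symm (of t)) := by
  classical
  obtain ⟨J₀, rfl⟩ : ∃ J₀ : Set ι, #J₀ = c := le_mk_iff_exists_set.mp hc.le
  set A := ⋃ b ∈ of '' J₀, displacement f.symm b
  set W := ⋃ a ∈ A, displacement f a
  set J := J₀ ∪ ⋃ w ∈ W, letters w
  have hJ : #J < #ι := by
    have hA : #A < #ι := hf' _ (mk_image_le.trans_lt hc)
    refine (mk_union_le _ _).trans_lt (add_lt_of_lt hι.le hc ?_)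
    exact mk_biUnion_lt_of_lt hι.le letters (hf A hA)
      (fun w _ => (finite_letters w).lt_aleph0.le) hι
  obtain ⟨t, ht⟩ : ∃ t, t ∉ J := by
    by_contra! h
    simp [Set.eq_univ_of_forall h] at hJ
  have hW : ∀ w ∈ W, w ∈ supported J := fun w hw =>
    (Set.subset_biUnion_of_mem (u := letters) hw).trans Set.subset_union_right
  have hA : ∀ j ∈ J₀, f.symm (of j) * (f.symm 1)⁻¹ ∈ A := fun j hj =>
    Set.mem_biUnion (Set.mem_image_of_mem of hj) ⟨1, by simp only [mul_one]⟩
  refine ⟨t, mk_le_of_injective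
    (f := fun j : J₀ => (⟨_, of j, rfl⟩ : displacement f.symm (of t))) fun j j' hjj' => ?_⟩
  by_contra hne
  obtain ⟨w, hw, w', hw', heq⟩ := conj_mem_displacement_mul_inv f (congrArg Subtype.val hjj')
  refine conj_of_notMem_supported ht (w := of (j : ι) * (of (j' : ι))⁻¹) ?_ ?_ ?_
  · exact mul_mem (of_mem_supported (Or.inl j.2)) (inv_mem (of_mem_supported (Or.inl j'.2)))
  · rwa [Ne, mul_inv_eq_one, of_injective.eq_iff, Subtype.coe_inj]
  · rw [← heq]
    exact mul_mem (hW w (Set.mem_biUnion (hA j j.2) hw))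
      (by simpa using hW _ (Set.mem_biUnion (hA j' j'.2) hw'))

theorem not_asymorphic_abelian_free_general (γ κ : Cardinal.{u}) (hγ : ℵ₀ < γ)
    (hκ : (ℵ₀ < κ ∧ κ < γ) ∨ (κ = γ ∧ γ.ord.cof < γ))
    (G : Type u) [CommGroup G]
    (ι : Type u) (hι : #ι = γ) :
    ¬ ∃ f : G ≃ FreeGroup ι, IsAsymorphism κ f := by
  rintro ⟨f, hf⟩
  subst hι
  have hκ₀ : ℵ₀ < κ := by rcases hκ with ⟨h, -⟩ | ⟨rfl, -⟩ <;> assumption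
  have hκι : κ ≤ #ι := by rcases hκ with ⟨-, h⟩ | ⟨rfl, -⟩; exacts [h.le, le_rfl]
  have hκ0 : κ ≠ 0 := (aleph0_pos.trans hκ₀).ne'
  have hsmall := hf.hasSmallDisplacements hκ0
  have hsmall' := hf.symm.hasSmallDisplacements hκ0
  have hlarge : ∀ c < #ι, ∃ t, c ≤ #(displacement f.symm (of t)) := fun c hc =>
    exists_generator_le_mk_displacement_symm f hγ (hsmall.mono hκ₀.le hκι)
      (hsmall'.mono hκ₀.le hκι) hc
  obtain ⟨T, hT, hκT⟩ : ∃ T : Set ι, #T < κ ∧ κ ≤ #(⋃ t ∈ T, displacement f.symm (of t)) := by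
    rcases hκ with ⟨-, hκγ⟩ | ⟨rfl, hcof⟩
    · obtain ⟨t, ht⟩ := hlarge κ hκγ
      exact ⟨{t}, by simpa using one_lt_aleph0.trans hκ₀, by simpa using ht⟩
    · exact exists_mk_lt_le_mk_biUnion_of_cof_ord_lt hγ.le hcof _ hlarge
  have hT' := hsmall' (of '' T) (mk_image_le.trans_lt hT)
  rw [Set.biUnion_image] at hT'
  exact hT'.not_ge hκT

/-- Let `G` be an Abelian group of cardinality `γ > ℵ₀` and let `F_γ` be the free group
of rank `γ`. If either `ℵ₀ < κ < γ`, or `κ = γ` and `γ` is singular, then `G` and `F_γ`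
are not `κ`-asymorphic. -/
theorem not_asymorphic_abelian_free (γ κ : Cardinal.{u}) (hγ : ℵ₀ < γ)
    (hκ : (ℵ₀ < κ ∧ κ < γ) ∨ (κ = γ ∧ γ.ord.cof < γ))
    (G : Type u) [CommGroup G] (hG : #G = γ)
    (ι : Type u) (hι : #ι = γ) :
    ¬ ∃ f : G ≃ FreeGroup ι, IsAsymorphism κ f :=
  not_asymorphic_abelian_free_general γ κ hγ hκ G ι hι
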